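/- Let α > 1 and b > 0 be reals and let x* = (b/(α−1))^(1/α). Let D be a finite set with loads ℓ(d) > 0, and suppose the set D_s = {d ∈ D : ℓ(d) < x*} is nonempty. Let P be a partition of D such that: (1) every d ∈ D with ℓ(d) ≥ x* forms a singleton part {d}; (2) every other nonempty part is contained in D_s and has load at most x*; and (3) at most one nonempty part has load strictly less than x*/2. Then for every partition P′ of D, Σ_{A ∈ P, A ≠ ∅} (ℓ(A)^α + b) ≤ (1 − (1/α)·(1 − 2^(−α))) · (2 + x*/ℓ(D_s)) · Σ_{A ∈ P′, A ≠ ∅} (ℓ(A)^α + b). (This is the competitive-ratio guarantee of the online algorithm for (·,·)-VMA and for (C,·)-VMA with x* < C: any assignment satisfying the algorithm's invariant is within factor (1 − (1/α)(1 − 2^(−α)))·(2 + x*/ℓ(D_s)) of the optimum.) -/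

import Mathlib

/-!
Put `s = x*`, so that `b = (α - 1) s ^ α` and the line `x ↦ α s^(α-1) x` is tangent to the
power `x ↦ x ^ α + b` at `s`. Weigh a VM of load `ℓ ≥ s` by its own power and a VM of load
`ℓ < s` by `k ℓ`.

For `k = α s^(α-1)` the weights of any part add up to at most its power: by the tangent line,
and because the power is superadditive on loads `≥ s`. So every assignment costs at least
`B + α s^(α-1) ℓ(D_s)`, where `B` is the total power of the large VMs on their own.

For `k = 2 (α - 1 + 2^(-α)) s^(α-1)` the chord of the convex power over `[s/2, s]` lies below
`k x`. So every part of the algorithm's assignment costs at most its weight, except the one part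
of load below `s/2`, which costs at most `(s/2)^α + b`. With `ρ = 1 - (1 - 2^(-α))/α` one has
`k = 2ρ α s^(α-1)` and `(s/2)^α + b = ρ α s^α`. The algorithm therefore costs at most
`B + ρ (2 + s/ℓ(D_s)) α s^(α-1) ℓ(D_s)`, and this is at most `ρ (2 + s/ℓ(D_s))` times the lower
bound, because `ρ (2 + s/ℓ(D_s)) ≥ 2ρ ≥ 1`.
-/

open Real Finset Function

lemma two_sub_le_two_mul_two_rpow_neg {α : ℝ} (hα : 1 ≤ α) : 2 - α ≤ 2 * (2 : ℝ) ^ (-α) := by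
  have htangent : 1 + (1 - α) * log 2 ≤ (2 : ℝ) ^ (1 - α) := by
    rw [rpow_def_of_pos two_pos]
    linarith [add_one_le_exp (log 2 * (1 - α))]
  have hlog : log 2 ≤ 1 := by linarith [log_two_lt_d9]
  rw [sub_eq_neg_add, rpow_add_one two_ne_zero] at htangent
  nlinarith

lemma rpow_add_mul_rpow_sub_one_mul_sub_le {α x y : ℝ} (hα : 1 ≤ α) (hx : 0 < x) (hy : 0 ≤ y) :
    x ^ α + α * x ^ (α - 1) * (y - x) ≤ y ^ α := by
  have hbern := one_add_mul_self_le_rpow_one_add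
    (show -1 ≤ (y - x) / x by rw [le_div_iff₀ hx]; linarith) hα
  have hyx : 1 + (y - x) / x = y / x := by field_simp; ring
  rw [hyx, div_rpow hy hx.le, le_div_iff₀ (rpow_pos_of_pos hx α)] at hbern
  rw [rpow_sub_one hx.ne']
  calc x ^ α + α * (x ^ α / x) * (y - x) = (1 + α * ((y - x) / x)) * x ^ α := by ring
    _ ≤ y ^ α := hbern

section
variable {α b s : ℝ}

lemma mul_rpow_sub_one_mul_le_rpow_add (hα : 1 ≤ α) (hs : 0 < s) (hb : (α - 1) * s ^ α ≤ b)
    {y : ℝ} (hy : 0 ≤ y) : α * s ^ (α - 1) * y ≤ y ^ α + b := by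
  have htangent := rpow_add_mul_rpow_sub_one_mul_sub_le hα hs hy
  rw [rpow_sub_one hs.ne'] at htangent ⊢
  have : α * (s ^ α / s) * (y - s) = α * (s ^ α / s) * y - α * s ^ α := by field_simp
  linarith

lemma rpow_add_mul_le_rpow_add {x y : ℝ} (hα : 1 ≤ α) (hs : 0 < s) (hx : s ≤ x) (hy : 0 ≤ y) :
    x ^ α + α * s ^ (α - 1) * y ≤ (x + y) ^ α := by
  have htangent :=
    rpow_add_mul_rpow_sub_one_mul_sub_le hα (hs.trans_le hx) (by linarith : 0 ≤ x + y)
  have hmono : s ^ (α - 1) ≤ x ^ (α - 1) := rpow_le_rpow hs.le hx (by linarith)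
  rw [add_sub_cancel_left] at htangent
  nlinarith [mul_le_mul_of_nonneg_right hmono hy]

lemma rpow_add_le_mul_of_mem_Icc (hα : 1 ≤ α) (hs : 0 < s) (hb : b ≤ (α - 1) * s ^ α)
    {x : ℝ} (hx : x ∈ Set.Icc (s / 2) s) :
    x ^ α + b ≤ 2 * (α - 1 + 2 ^ (-α)) * s ^ (α - 1) * x := by
  set k := 2 * (α - 1 + (2 : ℝ) ^ (-α)) * s ^ (α - 1)
  have hk : 0 ≤ k := by
    have := two_sub_le_two_mul_two_rpow_neg hα
    have := rpow_pos_of_pos hs (α - 1)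
    positivity
  have hconv : ConvexOn ℝ (Set.Ici 0) ((fun x : ℝ => x ^ α + b) - fun x => k • id x) :=
    ((convexOn_rpow hα).add_const b).sub ((concaveOn_id (convex_Ici 0)).smul hk)
  have hmax := hconv.le_on_segment (Set.mem_Ici.2 (by positivity : 0 ≤ s / 2))
    (Set.mem_Ici.2 hs.le) (by rwa [segment_eq_Icc (by linarith)])
  simp only [Pi.sub_apply, id, smul_eq_mul] at hmax
  have hks : k * s = 2 * (α - 1 + 2 ^ (-α)) * s ^ α := by
    simp only [k, rpow_sub_one hs.ne']; field_simp
  have hhalf : (s / 2) ^ α = 2 ^ (-α) * s ^ α := by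
    rw [div_rpow hs.le zero_le_two, rpow_neg zero_le_two, div_eq_inv_mul]
  have hpos := rpow_pos_of_pos hs α
  have h2 := two_sub_le_two_mul_two_rpow_neg hα
  have hleft : (s / 2) ^ α + b - k * (s / 2) ≤ 0 := by nlinarith
  have hright : s ^ α + b - k * s ≤ 0 := by nlinarith
  linarith [max_le hleft hright]

lemma rpow_add_rpow_add_le_rpow_add (hα : 1 ≤ α) (hs : 0 < s) (hb : b ≤ (α - 1) * s ^ α)
    {x y : ℝ} (hx : s ≤ x) (hy : s ≤ y) : x ^ α + y ^ α + b ≤ (x + y) ^ α := by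
  wlog hyx : y ≤ x generalizing x y
  · rw [add_comm x y]; linarith [this hy hx (by linarith)]
  have hy0 : 0 < y := hs.trans_le hy
  have htangent :=
    rpow_add_mul_rpow_sub_one_mul_sub_le hα (hs.trans_le hx) (by linarith : 0 ≤ x + y)
  rw [add_sub_cancel_left] at htangent
  have hyx' : y ^ (α - 1) ≤ x ^ (α - 1) := rpow_le_rpow hy0.le hyx (by linarith)
  have hsx : s ^ (α - 1) ≤ x ^ (α - 1) := rpow_le_rpow hs.le (hy.trans hyx) (by linarith)
  have hyy : y ^ α ≤ x ^ (α - 1) * y := by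
    calc y ^ α = y ^ (α - 1) * y := by rw [rpow_sub_one hy0.ne']; field_simp
      _ ≤ x ^ (α - 1) * y := by gcongr
  have hss : s ^ α ≤ x ^ (α - 1) * y := by
    calc s ^ α = s ^ (α - 1) * s := by rw [rpow_sub_one hs.ne']; field_simp
      _ ≤ x ^ (α - 1) * y := by gcongr; exact (rpow_pos_of_pos hs _).le.trans hsx
  nlinarith [mul_le_mul_of_nonneg_left hss (by linarith : (0:ℝ) ≤ α - 1)]

end

noncomputable def vmWeight (α b s k x : ℝ) : ℝ := if s ≤ x then x ^ α + b else k * x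

section
variable {ι : Type*} {α b s : ℝ} (ℓ : ι → ℝ)

lemma sum_vmWeight (k : ℝ) (T : Finset ι) :
    ∑ d ∈ T, vmWeight α b s k (ℓ d) =
      ∑ d ∈ T with s ≤ ℓ d, (ℓ d ^ α + b) + k * ∑ d ∈ T with ℓ d < s, ℓ d := by
  simp only [vmWeight, sum_ite, mul_sum, not_le]

lemma sum_rpow_add_le_rpow_sum_add (hα : 1 ≤ α) (hs : 0 < s) (hb : b ≤ (α - 1) * s ^ α)
    {T : Finset ι} (hT : T.Nonempty) (hℓ : ∀ d ∈ T, s ≤ ℓ d) :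
    ∑ d ∈ T, (ℓ d ^ α + b) ≤ (∑ d ∈ T, ℓ d) ^ α + b := by
  induction hT using Finset.Nonempty.cons_induction with
  | singleton a => simp
  | cons a T ha hT ih =>
    simp only [forall_mem_cons] at hℓ
    rw [sum_cons, sum_cons]
    have hsum : s ≤ ∑ d ∈ T, ℓ d := by
      obtain ⟨d, hd⟩ := hT
      exact (hℓ.2 d hd).trans
        (single_le_sum (fun e he => hs.le.trans (hℓ.2 e he)) hd)
    linarith [ih hℓ.2, rpow_add_rpow_add_le_rpow_add hα hs hb hℓ.1 hsum]

lemma sum_vmWeight_le_rpow_sum_add (hα : 1 ≤ α) (hs : 0 < s) (hb : b = (α - 1) * s ^ α)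
    (T : Finset ι) (hℓ : ∀ d ∈ T, 0 ≤ ℓ d) :
    ∑ d ∈ T, vmWeight α b s (α * s ^ (α - 1)) (ℓ d) ≤ (∑ d ∈ T, ℓ d) ^ α + b := by
  classical
  rw [sum_vmWeight, ← sum_filter_add_sum_filter_not T (fun d => s ≤ ℓ d) ℓ]
  simp only [not_le]
  have hsmall : 0 ≤ ∑ d ∈ T with ℓ d < s, ℓ d :=
    sum_nonneg fun d hd => hℓ d (mem_filter.1 hd).1
  rcases (T.filter fun d => s ≤ ℓ d).eq_empty_or_nonempty with hbig | hbig
  · simp only [hbig, sum_empty, zero_add]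
    exact mul_rpow_sub_one_mul_le_rpow_add hα hs hb.ge hsmall
  · have hmem : ∀ d ∈ T.filter (s ≤ ℓ ·), s ≤ ℓ d := fun d hd => (mem_filter.1 hd).2
    obtain ⟨d, hd⟩ := hbig
    have hsum : s ≤ ∑ d ∈ T.filter (s ≤ ℓ ·), ℓ d :=
      (hmem d hd).trans (single_le_sum (fun e he => hs.le.trans (hmem e he)) hd)
    linarith [sum_rpow_add_le_rpow_sum_add ℓ hα hs hb.le ⟨d, hd⟩ hmem,
      rpow_add_mul_le_rpow_add hα hs hsum hsmall]

lemma rpow_sum_add_le_sum_vmWeight_add (hα : 1 ≤ α) (hs : 0 < s) (hb : b = (α - 1) * s ^ α)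
    {T : Finset ι} (hℓ : ∀ d ∈ T, 0 ≤ ℓ d)
    (hT : (∃ d, T = {d} ∧ s ≤ ℓ d) ∨ ((∀ d ∈ T, ℓ d < s) ∧ ∑ d ∈ T, ℓ d ≤ s)) :
    (∑ d ∈ T, ℓ d) ^ α + b ≤
      ∑ d ∈ T, vmWeight α b s (2 * (α - 1 + 2 ^ (-α)) * s ^ (α - 1)) (ℓ d) +
        if ∑ d ∈ T, ℓ d < s / 2 then (s / 2) ^ α + b else 0 := by
  have hb0 : 0 ≤ b := hb ▸ mul_nonneg (by linarith) (rpow_nonneg hs.le α)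
  have hexc : 0 ≤ if ∑ d ∈ T, ℓ d < s / 2 then (s / 2) ^ α + b else 0 := by
    split_ifs <;> positivity
  rcases hT with ⟨d, rfl, hd⟩ | ⟨hsmall, hle⟩
  · simpa [vmWeight, hd] using hexc
  set k := 2 * (α - 1 + (2 : ℝ) ^ (-α)) * s ^ (α - 1)
  have hk : 0 ≤ k := by
    have := two_sub_le_two_mul_two_rpow_neg hα
    have := rpow_pos_of_pos hs (α - 1)
    positivity
  have hweight : ∑ d ∈ T, vmWeight α b s k (ℓ d) = k * ∑ d ∈ T, ℓ d := by
    rw [mul_sum]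
    exact sum_congr rfl fun d hd => if_neg (not_le.2 (hsmall d hd))
  have hL : 0 ≤ ∑ d ∈ T, ℓ d := sum_nonneg hℓ
  rw [hweight]
  split_ifs with hhalf
  · have := rpow_le_rpow hL hhalf.le (by linarith : 0 ≤ α)
    nlinarith
  · linarith [rpow_add_le_mul_of_mem_Icc hα hs hb.le ⟨not_lt.1 hhalf, hle⟩]

end

section
variable {ι κ : Type*} [Fintype κ] {α b s : ℝ} (ℓ : ι → ℝ) {D : Finset ι} {A : κ → Finset ι}

lemma sum_filter_nonempty_sum_eq_sum {M : Type*} [AddCommMonoid M]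
    (hdisj : Pairwise (Disjoint on A)) (hcover : ∀ d ∈ D, ∃ i, d ∈ A i) (hsub : ∀ i, A i ⊆ D)
    (g : ι → M) : ∑ i with (A i).Nonempty, ∑ d ∈ A i, g d = ∑ d ∈ D, g d := by
  classical
  rw [sum_filter_of_ne fun i _ h => nonempty_of_sum_ne_zero h,
    ← sum_biUnion (hdisj.set_pairwise _)]
  congr 1
  ext d
  simp only [mem_biUnion, mem_univ, true_and]
  exact ⟨fun ⟨i, hi⟩ => hsub i hi, hcover d⟩

lemma sum_vmWeight_le_power (hα : 1 ≤ α) (hs : 0 < s) (hb : b = (α - 1) * s ^ α)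
    (hℓ : ∀ d ∈ D, 0 ≤ ℓ d) (hdisj : Pairwise (Disjoint on A))
    (hcover : ∀ d ∈ D, ∃ i, d ∈ A i) (hsub : ∀ i, A i ⊆ D) :
    ∑ d ∈ D, vmWeight α b s (α * s ^ (α - 1)) (ℓ d) ≤
      ∑ i with (A i).Nonempty, ((∑ d ∈ A i, ℓ d) ^ α + b) := by
  rw [← sum_filter_nonempty_sum_eq_sum hdisj hcover hsub]
  exact sum_le_sum fun i _ =>
    sum_vmWeight_le_rpow_sum_add ℓ hα hs hb _ fun d hd => hℓ d (hsub i hd)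

lemma power_le_sum_vmWeight_add (hα : 1 ≤ α) (hs : 0 < s) (hb : b = (α - 1) * s ^ α)
    (hℓ : ∀ d ∈ D, 0 ≤ ℓ d) (hdisj : Pairwise (Disjoint on A))
    (hcover : ∀ d ∈ D, ∃ i, d ∈ A i) (hsub : ∀ i, A i ⊆ D)
    (hparts : ∀ i, (A i).Nonempty → (∃ d, A i = {d} ∧ s ≤ ℓ d) ∨
      (A i ⊆ D.filter (ℓ · < s) ∧ ∑ d ∈ A i, ℓ d ≤ s))
    (hhalf : ∀ i j, (A i).Nonempty → (A j).Nonempty →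
      ∑ d ∈ A i, ℓ d < s / 2 → ∑ d ∈ A j, ℓ d < s / 2 → i = j) :
    ∑ i with (A i).Nonempty, ((∑ d ∈ A i, ℓ d) ^ α + b) ≤
      ∑ d ∈ D, vmWeight α b s (2 * (α - 1 + 2 ^ (-α)) * s ^ (α - 1)) (ℓ d) +
        ((s / 2) ^ α + b) := by
  classical
  set N := univ.filter fun i => (A i).Nonempty
  have hexc : ∑ i ∈ N, (if ∑ d ∈ A i, ℓ d < s / 2 then (s / 2) ^ α + b else 0) ≤
      (s / 2) ^ α + b := by
    have hcard : (N.filter fun i => ∑ d ∈ A i, ℓ d < s / 2).card ≤ 1 :=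
      card_le_one.2 fun i hi j hj => by
        simp only [N, mem_filter, mem_univ, true_and] at hi hj
        exact hhalf i j hi.1 hj.1 hi.2 hj.2
    have hb0 : 0 ≤ (s / 2) ^ α + b := hb ▸ by
      have := rpow_nonneg hs.le α
      have := rpow_nonneg (half_pos hs).le α
      nlinarith
    rw [← sum_filter, sum_const, nsmul_eq_mul]
    exact mul_le_of_le_one_left hb0 (by exact_mod_cast hcard)
  calc ∑ i ∈ N, ((∑ d ∈ A i, ℓ d) ^ α + b)
      ≤ ∑ i ∈ N, (∑ d ∈ A i, vmWeight α b s (2 * (α - 1 + 2 ^ (-α)) * s ^ (α - 1)) (ℓ d) +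
          if ∑ d ∈ A i, ℓ d < s / 2 then (s / 2) ^ α + b else 0) :=
        sum_le_sum fun i hi => rpow_sum_add_le_sum_vmWeight_add ℓ hα hs hb
          (fun d hd => hℓ d (hsub i hd))
          ((hparts i (mem_filter.1 hi).2).imp_right fun h =>
            ⟨fun d hd => (mem_filter.1 (h.1 hd) : d ∈ D ∧ ℓ d < s).2, h.2⟩)
    _ ≤ _ := by
      rw [sum_add_distrib, sum_filter_nonempty_sum_eq_sum hdisj hcover hsub]
      exact (add_le_add_iff_left _).2 hexc

end

lemma add_le_ratio_mul_of_add_le {α b s B W P : ℝ} (hα : 1 < α) (hs : 0 < s)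
    (hb : b = (α - 1) * s ^ α) (hB : 0 ≤ B) (hW : 0 < W) (hP : B + α * s ^ (α - 1) * W ≤ P) :
    B + 2 * (α - 1 + 2 ^ (-α)) * s ^ (α - 1) * W + ((s / 2) ^ α + b) ≤
      (1 - (1 / α) * (1 - (2 : ℝ) ^ (-α))) * (2 + s / W) * P := by
  set K := (1 - (1 / α) * (1 - (2 : ℝ) ^ (-α))) * (2 + s / W)
  have hα0 : 0 < α := by linarith
  have hK : 1 ≤ K := by
    have hρ : 1 / 2 ≤ 1 - (1 / α) * (1 - (2 : ℝ) ^ (-α)) := by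
      have : (1 - (2 : ℝ) ^ (-α)) / α ≤ 1 / 2 := by
        rw [div_le_iff₀ hα0]; linarith [two_sub_le_two_mul_two_rpow_neg hα.le]
      rw [div_mul_eq_mul_div, one_mul]; linarith
    have : 2 ≤ 2 + s / W := by linarith [div_pos hs hW]
    nlinarith
  have hhalf : (s / 2) ^ α = 2 ^ (-α) * s ^ α := by
    rw [div_rpow hs.le zero_le_two, rpow_neg zero_le_two, div_eq_inv_mul]
  have hsplit : K * (α * s ^ (α - 1) * W) =
      2 * (α - 1 + 2 ^ (-α)) * s ^ (α - 1) * W + ((s / 2) ^ α + b) := by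
    simp only [K, hhalf, hb, rpow_sub_one hs.ne']
    field_simp
    ring
  nlinarith [mul_le_mul_of_nonneg_left hP (zero_le_one.trans hK)]

theorem stmt17_general {ι : Type*} (α b : ℝ) (hα : 1 < α) (hb : 0 < b)
    (D : Finset ι) (ℓ : ι → ℝ) (hℓ : ∀ d ∈ D, 0 < ℓ d)
    (xstar : ℝ) (hxstar : xstar = (b / (α - 1)) ^ (1 / α))
    (Ds : Finset ι) (hDs : Ds = D.filter (fun d => ℓ d < xstar))
    (hDsne : Ds.Nonempty)
    (m : ℕ) (A : Fin m → Finset ι)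
    (hdisj : ∀ i j, i ≠ j → Disjoint (A i) (A j))
    (hcover : ∀ d ∈ D, ∃ i, d ∈ A i) (hsub : ∀ i, A i ⊆ D)
    (h2 : ∀ i, (A i).Nonempty →
      (∃ d, A i = {d} ∧ xstar ≤ ℓ d) ∨ (A i ⊆ Ds ∧ ∑ d ∈ A i, ℓ d ≤ xstar))
    (h3 : ∀ i j, (A i).Nonempty → (A j).Nonempty →
      (∑ d ∈ A i, ℓ d) < xstar / 2 → (∑ d ∈ A j, ℓ d) < xstar / 2 → i = j)
    (m' : ℕ) (A' : Fin m' → Finset ι)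
    (hdisj' : ∀ i j, i ≠ j → Disjoint (A' i) (A' j))
    (hcover' : ∀ d ∈ D, ∃ i, d ∈ A' i) (hsub' : ∀ i, A' i ⊆ D) :
    ∑ i ∈ Finset.univ.filter (fun i => (A i).Nonempty), ((∑ d ∈ A i, ℓ d) ^ α + b) ≤
      (1 - (1 / α) * (1 - (2 : ℝ) ^ (-α))) * (2 + xstar / ∑ d ∈ Ds, ℓ d) *
        ∑ i ∈ Finset.univ.filter (fun i => (A' i).Nonempty),
          ((∑ d ∈ A' i, ℓ d) ^ α + b) := by
  subst hDs
  have hα1 : 0 < α - 1 := by linarith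
  have hs : 0 < xstar := hxstar ▸ rpow_pos_of_pos (div_pos hb hα1) _
  have hb' : b = (α - 1) * xstar ^ α := by
    rw [hxstar, ← rpow_mul (div_pos hb hα1).le, one_div_mul_cancel (by linarith), rpow_one]
    field_simp
  have hℓ' : ∀ d ∈ D, 0 ≤ ℓ d := fun d hd => (hℓ d hd).le
  have hOPT := sum_vmWeight_le_power ℓ hα.le hs hb' hℓ' hdisj' hcover' hsub'
  have hALG := power_le_sum_vmWeight_add ℓ hα.le hs hb' hℓ' hdisj hcover hsub h2 h3
  rw [sum_vmWeight] at hOPT hALG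
  have hB : 0 ≤ ∑ d ∈ D with xstar ≤ ℓ d, (ℓ d ^ α + b) :=
    sum_nonneg fun d hd => add_nonneg (rpow_nonneg (hℓ' d (mem_filter.1 hd).1) _) hb.le
  have hW : 0 < ∑ d ∈ D with ℓ d < xstar, ℓ d :=
    sum_pos (fun d hd => hℓ d (mem_filter.1 hd).1) hDsne
  exact hALG.trans (add_le_ratio_mul_of_add_le hα hs hb' hB hW hOPT)

/-- Competitive-ratio guarantee of the online algorithm for
(·,·)-VMA and (C,·)-VMA with x* < C. Let x* = (b/(α−1))^(1/α), and suppose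
D_s = {d ∈ D : ℓ(d) < x*} is nonempty. Let A be a partition of D such that:
(1) every VM of load ≥ x* is in a singleton part; (2) every other nonempty part
is contained in D_s and has load at most x*; (3) at most one nonempty part has
load strictly below x*/2. Then for every partition A' of D, the power of A is at
most (1 − (1/α)(1 − 2^(−α)))·(2 + x*/ℓ(D_s)) times the power of A'. -/
theorem stmt17 {ι : Type*} [DecidableEq ι] (α b : ℝ) (hα : 1 < α) (hb : 0 < b)
    (D : Finset ι) (ℓ : ι → ℝ) (hℓ : ∀ d ∈ D, 0 < ℓ d)
    (xstar : ℝ) (hxstar : xstar = (b / (α - 1)) ^ (1 / α))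
    (Ds : Finset ι) (hDs : Ds = D.filter (fun d => ℓ d < xstar))
    (hDsne : Ds.Nonempty)
    (m : ℕ) (A : Fin m → Finset ι)
    (hdisj : ∀ i j, i ≠ j → Disjoint (A i) (A j))
    (hcover : ∀ d ∈ D, ∃ i, d ∈ A i) (hsub : ∀ i, A i ⊆ D)
    (h1 : ∀ i, ∀ d ∈ A i, xstar ≤ ℓ d → A i = {d})
    (h2 : ∀ i, (A i).Nonempty →
      (∃ d, A i = {d} ∧ xstar ≤ ℓ d) ∨ (A i ⊆ Ds ∧ ∑ d ∈ A i, ℓ d ≤ xstar))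
    (h3 : ∀ i j, (A i).Nonempty → (A j).Nonempty →
      (∑ d ∈ A i, ℓ d) < xstar / 2 → (∑ d ∈ A j, ℓ d) < xstar / 2 → i = j)
    (m' : ℕ) (A' : Fin m' → Finset ι)
    (hdisj' : ∀ i j, i ≠ j → Disjoint (A' i) (A' j))
    (hcover' : ∀ d ∈ D, ∃ i, d ∈ A' i) (hsub' : ∀ i, A' i ⊆ D) :
    ∑ i ∈ Finset.univ.filter (fun i => (A i).Nonempty), ((∑ d ∈ A i, ℓ d) ^ α + b) ≤
      (1 - (1 / α) * (1 - (2 : ℝ) ^ (-α))) * (2 + xstar / ∑ d ∈ Ds, ℓ d) *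
        ∑ i ∈ Finset.univ.filter (fun i => (A' i).Nonempty),
          ((∑ d ∈ A' i, ℓ d) ^ α + b) :=
  stmt17_general α b hα hb D ℓ hℓ xstar hxstar Ds hDs hDsne m A hdisj hcover hsub h2 h3 m' A' hdisj'
    hcover' hsub'
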